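/- Let ((E_n)_{n∈ℕ}, (p_{m,n})) be an inverse system of vector lattices over ℕ, with surjective interval preserving lattice homomorphisms as connecting maps, and let (E,(p_n)) be its inverse limit. Then the order dual E^∼ equals the union over n of the ranges of the adjoints p_n^∼ : (E_n)^∼ → E^∼; that is, every order bounded linear functional on E factors through some p_n. -/

import Mathlib

section Defs

variable {X : Type*} [Lattice X] [AddCommGroup X] [Module ℝ X]

/-- `φ` is an order bounded linear functional: it is bounded on order intervals. -/
def OrdBddFunctional (φ : X →ₗ[ℝ] ℝ) : Prop :=
  ∀ u : X, 0 ≤ u → BddAbove (φ '' Set.Icc 0 u) ∧ BddBelow (φ '' Set.Icc 0 u)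

end Defs

/-! If `φ` vanished on no `ker (q n)`, choose `z k ∈ ker (q k)` with `φ (z k) = 1`. As
`q n (k • |z k|) = 0` for `n ≤ k`, the partial sums of the `k • |z k|` are eventually constant
under each `q n`, so they define a thread; its limit `w` dominates every `k • |z k|`, and then
`φ (k • z k) = k` contradicts the boundedness of `φ` on `{z | |z| ≤ w}`. So `ker (q n) ≤ ker φ`
for some `n`, and `φ = ψ ∘ q n` since `q n` is onto. Lifting points step by step along the
surjective interval preserving connecting maps shows that `q n` maps `[0, v]` onto
`[0, q n v]`, which makes `ψ` order bounded. -/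

section Threads

variable {E : ℕ → Type*} (p : ∀ {n m : ℕ}, n ≤ m → E m → E n)

def IsThread (t : ∀ n, E n) : Prop :=
  ∀ ⦃n m : ℕ⦄ (h : n ≤ m), p h (t m) = t n

theorem map_refl_of_surjective
    (hpsurj : ∀ {n m : ℕ} (h : n ≤ m), Function.Surjective (p h))
    (hpcomp : ∀ {n m k : ℕ} (hnm : n ≤ m) (hmk : m ≤ k) (x : E k),
      p hnm (p hmk x) = p (hnm.trans hmk) x)
    (n : ℕ) (x : E n) : p le_rfl x = x := by
  obtain ⟨y, rfl⟩ := hpsurj le_rfl x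
  exact hpcomp le_rfl le_rfl y

theorem isThread_of_succ (hrefl : ∀ (n : ℕ) (x : E n), p le_rfl x = x)
    (hpcomp : ∀ {n m k : ℕ} (hnm : n ≤ m) (hmk : m ≤ k) (x : E k),
      p hnm (p hmk x) = p (hnm.trans hmk) x)
    (s : ∀ n, E n) (hs : ∀ n, p n.le_succ (s (n + 1)) = s n) : IsThread p s := by
  intro n m h
  dsimp only
  induction m, h using Nat.le_induction with
  | base => exact hrefl n (s n)
  | succ m hnm ih => rw [← ih, ← hs m, hpcomp]

theorem exists_thread_extending (hrefl : ∀ (n : ℕ) (x : E n), p le_rfl x = x)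
    (hpcomp : ∀ {n m k : ℕ} (hnm : n ≤ m) (hmk : m ≤ k) (x : E k),
      p hnm (p hmk x) = p (hnm.trans hmk) x)
    (P : ∀ n, E n → Prop) (step : ∀ n b, P n b → ∃ c, p n.le_succ c = b ∧ P (n + 1) c)
    {n : ℕ} {a : E n} (ha : P n a) :
    ∃ t : ∀ m, E m, IsThread p t ∧ t n = a ∧ ∀ m, n ≤ m → P m (t m) := by
  choose c hc hP using step
  -- `u` is a thread of the shifted system `j ↦ E (n + j)`; `t` pushes it down to every level.
  let u : ∀ j, {b : E (n + j) // P (n + j) b} :=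
    fun j => Nat.rec ⟨a, ha⟩ (fun j b => ⟨c _ b.1 b.2, hP _ b.1 b.2⟩) j
  have hu : ∀ {i j : ℕ} (h : i ≤ j), p (Nat.add_le_add_left h n) (u j).1 = (u i).1 := fun h =>
    isThread_of_succ (E := fun j => E (n + j)) (fun h => p (Nat.add_le_add_left h n))
      (fun _ _ => hrefl _ _) (fun _ _ _ => hpcomp _ _ _) (fun j => (u j).1) (fun j => hc _ _ _) h
  let t : ∀ m, E m := fun m => p (Nat.le_add_left m n) (u m).1
  refine ⟨t, isThread_of_succ p hrefl hpcomp t fun m => ?_, hu n.zero_le, fun m hm => ?_⟩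
  · simp only [t]
    rw [hpcomp, ← hu m.le_succ, hpcomp]
  · obtain ⟨j, rfl⟩ := Nat.exists_eq_add_of_le hm
    have htj : t (n + j) = (u j).1 := hu (Nat.le_add_left j n)
    exact htj ▸ (u j).2

end Threads

theorem monotone_of_map_sup {α β : Type*} [SemilatticeSup α] [SemilatticeSup β] {f : α → β}
    (hf : ∀ a b, f (a ⊔ b) = f a ⊔ f b) : Monotone f :=
  OrderHomClass.mono (SupHom.mk f hf)

theorem map_nonneg_of_map_sup {A B F : Type*} [SemilatticeSup A] [Zero A] [SemilatticeSup B]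
    [Zero B] [FunLike F A B] [ZeroHomClass F A B] (f : F) (hf : ∀ a b, f (a ⊔ b) = f a ⊔ f b)
    {a : A} (ha : 0 ≤ a) : 0 ≤ f a :=
  map_zero f ▸ monotone_of_map_sup hf ha

theorem le_of_forall_map_le {ι L : Type*} {E : ι → Type*} [SemilatticeSup L]
    [∀ i, SemilatticeSup (E i)] {q : ∀ i, L → E i}
    (hq : ∀ i a b, q i (a ⊔ b) = q i a ⊔ q i b) (hsep : ∀ x y, (∀ i, q i x = q i y) → x = y)
    {x y : L} (h : ∀ i, q i x ≤ q i y) : x ≤ y :=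
  sup_eq_right.mp (hsep _ _ fun i => by rw [hq, sup_eq_right.mpr (h i)])

theorem abs_nsmul_le {G : Type*} [Lattice G] [AddCommGroup G] [IsOrderedAddMonoid G] (n : ℕ)
    (a : G) : |n • a| ≤ n • |a| := by
  induction n with
  | zero => simp
  | succ n ih =>
    rw [succ_nsmul, succ_nsmul]
    exact (abs_add_le _ _).trans (add_le_add_left ih _)

theorem LinearMap.exists_eq_comp_of_ker_le {R M N P : Type*} [CommRing R] [AddCommGroup M]
    [AddCommGroup N] [AddCommGroup P] [Module R M] [Module R N] [Module R P]
    {f : M →ₗ[R] N} {g : M →ₗ[R] P} (hf : Function.Surjective f) (h : ker f ≤ ker g) :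
    ∃ ψ : N →ₗ[R] P, g = ψ ∘ₗ f :=
  ⟨(ker f).liftQ g h ∘ₗ (f.quotKerEquivOfSurjective hf).symm.toLinearMap, by ext x; simp⟩

namespace OrdBddFunctional

variable {X : Type*} [Lattice X] [AddCommGroup X] [Module ℝ X]

theorem exists_le_of_abs_le [IsOrderedAddMonoid X] {φ : X →ₗ[ℝ] ℝ} (hφ : OrdBddFunctional φ)
    (w : X) : ∃ C, ∀ z, |z| ≤ w → φ z ≤ C := by
  obtain ⟨⟨M, hM⟩, ⟨m, hm⟩⟩ := hφ w⁺ (posPart_nonneg w)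
  refine ⟨M - m, fun z hz => ?_⟩
  have hw : |z| ≤ w⁺ := hz.trans (le_posPart w)
  have hpos : z⁺ ∈ Set.Icc 0 w⁺ :=
    ⟨posPart_nonneg z, (sup_le (le_abs_self z) (abs_nonneg z)).trans hw⟩
  have hneg : z⁻ ∈ Set.Icc 0 w⁺ :=
    ⟨negPart_nonneg z, (sup_le (neg_le_abs z) (abs_nonneg z)).trans hw⟩
  have := hM ⟨_, hpos, rfl⟩
  have := hm ⟨_, hneg, rfl⟩
  rw [← posPart_sub_negPart z, map_sub]
  linarith

theorem of_comp {Y : Type*} [Lattice Y] [AddCommGroup Y] [Module ℝ Y] {f : X →ₗ[ℝ] Y}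
    (hf : ∀ u, 0 ≤ u → ∃ v, 0 ≤ v ∧ Set.Icc 0 u ⊆ f '' Set.Icc 0 v) {ψ : Y →ₗ[ℝ] ℝ}
    (hψ : OrdBddFunctional (ψ ∘ₗ f)) : OrdBddFunctional ψ := by
  intro u hu
  obtain ⟨v, hv, huv⟩ := hf u hu
  have hsub : ψ '' Set.Icc 0 u ⊆ (ψ ∘ₗ f) '' Set.Icc 0 v := by
    rw [LinearMap.coe_comp, Set.image_comp]
    exact Set.image_mono huv
  exact ⟨(hψ v hv).1.mono hsub, (hψ v hv).2.mono hsub⟩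

end OrdBddFunctional

section InverseLimit

variable {E : ℕ → Type*} [∀ n, AddCommGroup (E n)] [∀ n, Module ℝ (E n)]
  {L : Type*} [AddCommGroup L] [Module ℝ L]

structure IsInverseLimit (p : ∀ {n m : ℕ}, n ≤ m → (E m →ₗ[ℝ] E n))
    (q : ∀ n : ℕ, L →ₗ[ℝ] E n) : Prop where
  map_comp : ∀ {n m : ℕ} (h : n ≤ m) (x : L), p h (q m x) = q n x
  ext : ∀ x y : L, (∀ n, q n x = q n y) → x = y
  exists_of_isThread : ∀ t : ∀ n, E n, IsThread (fun h => p h) t → ∃ x : L, ∀ n, q n x = t n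

variable {p : ∀ {n m : ℕ}, n ≤ m → (E m →ₗ[ℝ] E n)} {q : ∀ n : ℕ, L →ₗ[ℝ] E n}

namespace IsInverseLimit

theorem surjective (hL : IsInverseLimit p q)
    (hpsurj : ∀ {n m : ℕ} (h : n ≤ m), Function.Surjective (p h))
    (hpcomp : ∀ {n m k : ℕ} (hnm : n ≤ m) (hmk : m ≤ k) (x : E k),
      p hnm (p hmk x) = p (hnm.trans hmk) x) (n : ℕ) : Function.Surjective (q n) := by
  intro a
  obtain ⟨t, ht, htn, -⟩ := exists_thread_extending (fun h => p h)
    (map_refl_of_surjective (fun h => p h) hpsurj hpcomp) hpcomp (fun _ _ => True)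
    (fun m b _ => (hpsurj m.le_succ b).imp fun _ hc => ⟨hc, trivial⟩) (a := a) trivial
  obtain ⟨x, hx⟩ := hL.exists_of_isThread t ht
  exact ⟨x, (hx n).trans htn⟩

variable [∀ n, Lattice (E n)] [Lattice L]

theorem Icc_subset_image_Icc (hL : IsInverseLimit p q)
    (hqsup : ∀ (n : ℕ) (a b : L), q n (a ⊔ b) = q n a ⊔ q n b)
    (hpsup : ∀ {n m : ℕ} (h : n ≤ m) (a b : E m), p h (a ⊔ b) = p h a ⊔ p h b)
    (hpsurj : ∀ {n m : ℕ} (h : n ≤ m), Function.Surjective (p h))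
    (hpip : ∀ {n m : ℕ} (h : n ≤ m) (u : E m), 0 ≤ u →
      (p h) '' Set.Icc 0 u = Set.Icc 0 (p h u))
    (hpcomp : ∀ {n m k : ℕ} (hnm : n ≤ m) (hmk : m ≤ k) (x : E k),
      p hnm (p hmk x) = p (hnm.trans hmk) x) {v : L} (hv : 0 ≤ v) (n : ℕ) :
    Set.Icc 0 (q n v) ⊆ q n '' Set.Icc 0 v := by
  rintro a ⟨ha0, hav⟩
  obtain ⟨t, ht, htn, htv⟩ := exists_thread_extending (fun h => p h)
    (map_refl_of_surjective (fun h => p h) hpsurj hpcomp) hpcomp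
    (fun m b => b ∈ Set.Icc 0 (q m v))
    (fun m b hb => by
      rw [← hL.map_comp m.le_succ, ← hpip _ _ (map_nonneg_of_map_sup _ (hqsup _) hv)] at hb
      obtain ⟨c, hc, rfl⟩ := hb
      exact ⟨c, rfl, hc⟩)
    ⟨ha0, hav⟩
  have htv' : ∀ m, t m ∈ Set.Icc 0 (q m v) := by
    intro m
    rcases le_total n m with h | h
    · exact htv m h
    · rw [← ht h, htn, ← hL.map_comp h v]
      exact ⟨map_nonneg_of_map_sup _ (hpsup h) ha0, monotone_of_map_sup (hpsup h) hav⟩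
  obtain ⟨x, hx⟩ := hL.exists_of_isThread t ht
  refine ⟨x, ⟨?_, ?_⟩, (hx n).trans htn⟩
  · exact le_of_forall_map_le hqsup hL.ext fun m => by rw [map_zero, hx]; exact (htv' m).1
  · exact le_of_forall_map_le hqsup hL.ext fun m => by rw [hx]; exact (htv' m).2

theorem bddAbove_range_of_nonneg_of_map_self_eq_zero [IsOrderedAddMonoid L]
    (hL : IsInverseLimit p q) (hqsup : ∀ (n : ℕ) (a b : L), q n (a ⊔ b) = q n a ⊔ q n b)
    {f : ℕ → L} (hf0 : ∀ k, 0 ≤ f k) (hfq : ∀ k, q k (f k) = 0) :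
    BddAbove (Set.range f) := by
  have hqmono n := monotone_of_map_sup (hqsup n)
  have hvanish : ∀ {n k : ℕ}, n ≤ k → q n (f k) = 0 := fun h => by
    rw [← hL.map_comp h, hfq, map_zero]
  let s : ℕ → L := fun n => ∑ k ∈ Finset.range n, f k
  have hs : ∀ {n m : ℕ}, n ≤ m → q n (s m) = q n (s n) := fun h => by
    simp only [s, ← Finset.sum_range_add_sum_Ico _ h, map_add, map_sum,
      Finset.sum_eq_zero fun k hk => hvanish (Finset.mem_Ico.mp hk).1, add_zero]
  obtain ⟨w, hw⟩ := hL.exists_of_isThread (fun n => q n (s n)) fun _ _ h => by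
    dsimp only
    rw [hL.map_comp, hs h]
  refine ⟨w, ?_⟩
  rintro _ ⟨k, rfl⟩
  refine le_of_forall_map_le hqsup hL.ext fun n => ?_
  rw [hw]
  rcases lt_or_ge k n with h | h
  · exact hqmono n (Finset.single_le_sum (fun j _ => hf0 j) (Finset.mem_range.mpr h))
  · rw [hvanish h]
    exact map_nonneg_of_map_sup _ (hqsup n) (Finset.sum_nonneg fun j _ => hf0 j)

theorem exists_ker_le_ker [IsOrderedAddMonoid L] (hL : IsInverseLimit p q)
    (hqsup : ∀ (n : ℕ) (a b : L), q n (a ⊔ b) = q n a ⊔ q n b) {φ : L →ₗ[ℝ] ℝ}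
    (hφ : OrdBddFunctional φ) : ∃ n, LinearMap.ker (q n) ≤ LinearMap.ker φ := by
  by_contra! h
  choose x hxq hxφ using fun n => SetLike.not_le_iff_exists.mp (h n)
  let z : ℕ → L := fun k => (φ (x k))⁻¹ • x k
  have hzφ : ∀ k, φ (z k) = 1 := fun k => by
    simp only [z, map_smul, smul_eq_mul]
    exact inv_mul_cancel₀ (hxφ k)
  have hzq : ∀ k, q k (z k) = 0 := fun k => by
    simp only [z, map_smul, LinearMap.mem_ker.mp (hxq k), smul_zero]
  obtain ⟨w, hw⟩ := hL.bddAbove_range_of_nonneg_of_map_self_eq_zero hqsup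
    (f := fun k => k • |z k|) (fun k => nsmul_nonneg (abs_nonneg _) k)
    fun k => by simp only [abs, map_nsmul, hqsup, map_neg, hzq, neg_zero, sup_idem, smul_zero]
  obtain ⟨C, hC⟩ := hφ.exists_le_of_abs_le w
  obtain ⟨K, hK⟩ := exists_nat_gt C
  have hKC := hC (K • z K) ((abs_nsmul_le K (z K)).trans (hw ⟨K, rfl⟩))
  rw [map_nsmul, hzφ, nsmul_eq_mul, mul_one] at hKC
  linarith

end IsInverseLimit

end InverseLimit

theorem orderDual_of_inverseLimit_nat_general
    {E : ℕ → Type*} [∀ n, Lattice (E n)] [∀ n, AddCommGroup (E n)]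
    [∀ n, Module ℝ (E n)]
    (p : ∀ {n m : ℕ}, n ≤ m → (E m →ₗ[ℝ] E n))
    (hplat : ∀ {n m : ℕ} (h : n ≤ m) (a b : E m), p h (a ⊔ b) = p h a ⊔ p h b)
    (hpsurj : ∀ {n m : ℕ} (h : n ≤ m), Function.Surjective (p h))
    (hpip : ∀ {n m : ℕ} (h : n ≤ m) (u : E m), 0 ≤ u →
      (p h) '' Set.Icc 0 u = Set.Icc 0 (p h u))
    (hpcomp : ∀ {n m k : ℕ} (hnm : n ≤ m) (hmk : m ≤ k) (x : E k),
      p hnm (p hmk x) = p (hnm.trans hmk) x)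
    {L : Type*} [Lattice L] [AddCommGroup L]
    [CovariantClass L L (· + ·) (· ≤ ·)] [Module ℝ L]
    (q : ∀ n : ℕ, L →ₗ[ℝ] E n)
    (hqlat : ∀ (n : ℕ) (a b : L), q n (a ⊔ b) = q n a ⊔ q n b)
    (hqcompat : ∀ {n m : ℕ} (h : n ≤ m) (x : L), p h (q m x) = q n x)
    (hsep : ∀ x y : L, (∀ n, q n x = q n y) → x = y)
    (hthreads : ∀ t : ∀ n, E n, (∀ (n m : ℕ) (h : n ≤ m), p h (t m) = t n) →
      ∃ x : L, ∀ n, q n x = t n) :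
    ∀ φ : L →ₗ[ℝ] ℝ, OrdBddFunctional φ →
      ∃ (n : ℕ) (ψ : E n →ₗ[ℝ] ℝ), OrdBddFunctional ψ ∧ φ = ψ.comp (q n) := by
  intro φ hφ
  have : IsOrderedAddMonoid L := { add_le_add_left := fun _ _ h c => add_le_add_left h c }
  have hL : IsInverseLimit p q := ⟨hqcompat, hsep, hthreads⟩
  obtain ⟨n, hker⟩ := hL.exists_ker_le_ker hqlat hφ
  obtain ⟨ψ, rfl⟩ := LinearMap.exists_eq_comp_of_ker_le (hL.surjective hpsurj hpcomp n) hker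
  refine ⟨n, ψ, OrdBddFunctional.of_comp (fun u hu => ?_) hφ, rfl⟩
  obtain ⟨v, rfl⟩ := hL.surjective hpsurj hpcomp n u
  refine ⟨v ⊔ 0, le_sup_right, ?_⟩
  have hv : q n (v ⊔ 0) = q n v := by rw [hqlat, map_zero, sup_of_le_left hu]
  rw [← hv]
  exact hL.Icc_subset_image_Icc hqlat hplat hpsurj hpip hpcomp le_sup_right n

/-- Let `((E_n)_{n∈ℕ}, (p_{mn}))` be an inverse system of vector
lattices over `ℕ` with surjective interval preserving lattice homomorphisms as
connecting maps, and let `(E, (p_n))` be its inverse limit (expressed here by: the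
`p_n` form a compatible system of lattice homomorphisms which jointly separate the
points of `E`, and whose joint image is exactly the thread set).  Then the order dual
`E^∼` is the union of the ranges of the adjoints `p_n^∼`: every order bounded linear
functional on `E` factors as `ψ ∘ p_n` for some `n` and some order bounded `ψ` on
`E_n`. -/
theorem orderDual_of_inverseLimit_nat
    {E : ℕ → Type*} [∀ n, Lattice (E n)] [∀ n, AddCommGroup (E n)]
    [∀ n, CovariantClass (E n) (E n) (· + ·) (· ≤ ·)] [∀ n, Module ℝ (E n)]
    (p : ∀ {n m : ℕ}, n ≤ m → (E m →ₗ[ℝ] E n))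
    (hplat : ∀ {n m : ℕ} (h : n ≤ m) (a b : E m), p h (a ⊔ b) = p h a ⊔ p h b)
    (hpsurj : ∀ {n m : ℕ} (h : n ≤ m), Function.Surjective (p h))
    (hpip : ∀ {n m : ℕ} (h : n ≤ m) (u : E m), 0 ≤ u →
      (p h) '' Set.Icc 0 u = Set.Icc 0 (p h u))
    (hpcomp : ∀ {n m k : ℕ} (hnm : n ≤ m) (hmk : m ≤ k) (x : E k),
      p hnm (p hmk x) = p (hnm.trans hmk) x)
    {L : Type*} [Lattice L] [AddCommGroup L]
    [CovariantClass L L (· + ·) (· ≤ ·)] [Module ℝ L]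
    (q : ∀ n : ℕ, L →ₗ[ℝ] E n)
    (hqlat : ∀ (n : ℕ) (a b : L), q n (a ⊔ b) = q n a ⊔ q n b)
    (hqcompat : ∀ {n m : ℕ} (h : n ≤ m) (x : L), p h (q m x) = q n x)
    (hsep : ∀ x y : L, (∀ n, q n x = q n y) → x = y)
    (hthreads : ∀ t : ∀ n, E n, (∀ (n m : ℕ) (h : n ≤ m), p h (t m) = t n) →
      ∃ x : L, ∀ n, q n x = t n) :
    ∀ φ : L →ₗ[ℝ] ℝ, OrdBddFunctional φ →
      ∃ (n : ℕ) (ψ : E n →ₗ[ℝ] ℝ), OrdBddFunctional ψ ∧ φ = ψ.comp (q n) :=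
  orderDual_of_inverseLimit_nat_general p hplat hpsurj hpip hpcomp q hqlat hqcompat hsep hthreads
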